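/- arXiv:2310.05045 — 2 statements merged into one kernel-verified Lean document; each statement's English description precedes it below -/
import Mathlib

section
/- (ODE blow-up, n = 3 case) Let C > 0 and suppose X ∈ C²([0,T);ℝ) satisfies X''(t) ≥ C X(t)² / (e^t (t+1)) + X(t) for all t ∈ [0,T), with X(0) + X'(0) = ε x₀ where x₀ > 0, X(0) ≥ 0, X'(0) ≥ 0, and ε > 0 sufficiently small. Then T is finite, and moreover T ≤ exp(C' ε^{-1}) for some constant C' > 0 independent of ε. -/
/-!
Put `E = e^{-t} (X + X')`. The inequality gives `E' = e^{-t} (X'' - X) ≥ C (e^{-t} X)² / (t + 1)`,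
so `E ≥ E(0) = ε x₀ =: a`, and `(e^t X)' = e^{2t} E` converts a lower bound on `E` into one on `X`
after a short delay: `e^{-t} X(t) ≥ (δ/3) E(t - δ)` for `δ ≤ 1`. Feeding this back into `E'`, the
bound `E ≥ b` on `[q, T)` doubles to `E ≥ 2b` once `log (t + 1) ≥ log (q + δ + 1) + 9 / (C b δ²)`.
Taking `b = a 2ⁿ` and `δ = (3/4)ⁿ`, the `n`-th doubling costs `(3/4)ⁿ + 9/(C a) (8/9)ⁿ` in
logarithmic time; these sum to at most `4 + 81/(C a)`, so `E` would be unbounded at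
`t = exp (4 + 81/(C a)) - 1` unless `T` is smaller.
-/

open Real Set Filter Topology

lemma le_of_hasDerivAt_nonneg {f f' : ℝ → ℝ} {p t : ℝ} (hpt : p ≤ t)
    (hf : ContinuousOn f (Icc p t)) (hf' : ∀ u ∈ Ioo p t, HasDerivAt f (f' u) u)
    (hf'₀ : ∀ u ∈ Ioo p t, 0 ≤ f' u) : f p ≤ f t := by
  refine monotoneOn_of_hasDerivWithinAt_nonneg (f' := f') (convex_Icc p t) hf (fun u hu => ?_)
    (fun u hu => ?_) ⟨le_rfl, hpt⟩ ⟨hpt, le_rfl⟩ hpt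
  · rw [interior_Icc] at hu ⊢
    exact (hf' u hu).hasDerivWithinAt
  · rw [interior_Icc] at hu
    exact hf'₀ u hu

lemma exp_neg_two_mul_le {δ : ℝ} (h₀ : 0 ≤ δ) (h₁ : δ ≤ 1) :
    exp (-(2 * δ)) ≤ 1 - 2 * δ / 3 := by
  have h : 1 ≤ (1 - 2 * δ / 3) * (1 + 2 * δ) := by nlinarith
  rw [exp_neg, inv_le_iff_one_le_mul₀ (exp_pos _)]
  nlinarith [add_one_le_exp (2 * δ)]

noncomputable def logTime (K : ℝ) (n : ℕ) : ℝ :=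
  ∑ k ∈ Finset.range n, ((3 / 4 : ℝ) ^ k + K * (8 / 9) ^ k)

lemma logTime_succ (K : ℝ) (n : ℕ) :
    logTime K (n + 1) = logTime K n + ((3 / 4) ^ n + K * (8 / 9) ^ n) :=
  Finset.sum_range_succ _ n

lemma logTime_nonneg {K : ℝ} (hK : 0 ≤ K) (n : ℕ) : 0 ≤ logTime K n :=
  Finset.sum_nonneg fun _ _ => by positivity

lemma logTime_le {K : ℝ} (hK : 0 ≤ K) (n : ℕ) : logTime K n ≤ 4 + 9 * K := by
  have h₁ := geom_sum_Ico_le_of_lt_one (m := 0) (n := n) (by norm_num : (0 : ℝ) ≤ 3 / 4)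
    (by norm_num)
  have h₂ := geom_sum_Ico_le_of_lt_one (m := 0) (n := n) (by norm_num : (0 : ℝ) ≤ 8 / 9)
    (by norm_num)
  rw [logTime, Finset.sum_add_distrib, ← Finset.mul_sum]
  norm_num at h₁ h₂
  nlinarith

structure Supersolution (C T : ℝ) (x x' x'' : ℝ → ℝ) : Prop where
  continuousOn : ContinuousOn x (Ico 0 T)
  continuousOn_deriv : ContinuousOn x' (Ico 0 T)
  hasDerivAt : ∀ t ∈ Ioo 0 T, HasDerivAt x (x' t) t
  hasDerivAt_deriv : ∀ t ∈ Ioo 0 T, HasDerivAt x' (x'' t) t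
  le : ∀ t ∈ Ioo 0 T, C * x t ^ 2 / (exp t * (t + 1)) + x t ≤ x'' t

noncomputable def energy (x x' : ℝ → ℝ) (t : ℝ) : ℝ := exp (-t) * (x t + x' t)

namespace Supersolution

variable {C T : ℝ} {x x' x'' : ℝ → ℝ}

lemma continuousOn_energy (h : Supersolution C T x x' x'') :
    ContinuousOn (energy x x') (Ico 0 T) :=
  (continuous_exp.comp continuous_neg).continuousOn.mul (h.continuousOn.add h.continuousOn_deriv)

lemma hasDerivAt_energy (h : Supersolution C T x x' x'') {t : ℝ} (ht : t ∈ Ioo 0 T) :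
    HasDerivAt (energy x x') (exp (-t) * (x'' t - x t)) t := by
  have := ((hasDerivAt_neg t).exp).mul ((h.hasDerivAt t ht).add (h.hasDerivAt_deriv t ht))
  exact this.congr_deriv (by simp only [Pi.add_apply]; ring)

lemma sq_div_le_deriv_energy (h : Supersolution C T x x' x'') {t : ℝ} (ht : t ∈ Ioo 0 T) :
    C * (exp (-t) * x t) ^ 2 / (t + 1) ≤ exp (-t) * (x'' t - x t) := by
  have hle : C * x t ^ 2 / (exp t * (t + 1)) ≤ x'' t - x t := by linarith [h.le t ht]
  calc C * (exp (-t) * x t) ^ 2 / (t + 1) = exp (-t) * (C * x t ^ 2 / (exp t * (t + 1))) := by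
        rw [exp_neg]; field_simp
    _ ≤ exp (-t) * (x'' t - x t) := by gcongr

lemma monotoneOn_energy (h : Supersolution C T x x' x'') (hC : 0 ≤ C) :
    MonotoneOn (energy x x') (Ico 0 T) := by
  refine monotoneOn_of_hasDerivWithinAt_nonneg (f' := fun t => exp (-t) * (x'' t - x t))
    (convex_Ico 0 T) h.continuousOn_energy
    (fun t ht => ?_) (fun t ht => ?_) <;> rw [interior_Ico] at ht
  · exact (h.hasDerivAt_energy ht).hasDerivWithinAt
  · have : 0 < t + 1 := by linarith [ht.1]
    exact (by positivity : 0 ≤ C * (exp (-t) * x t) ^ 2 / (t + 1)).trans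
      (h.sq_div_le_deriv_energy ht)

lemma hasDerivAt_exp_mul (h : Supersolution C T x x' x'') {t : ℝ} (ht : t ∈ Ioo 0 T) :
    HasDerivAt (fun u => exp u * x u) (exp (2 * t) * energy x x' t) t := by
  refine ((hasDerivAt_exp t).mul (h.hasDerivAt t ht)).congr_deriv ?_
  rw [energy, ← mul_assoc, ← exp_add]
  ring_nf

lemma exp_mul_add_le (h : Supersolution C T x x' x'') (hC : 0 ≤ C) {p t : ℝ} (hp : 0 ≤ p)
    (hpt : p ≤ t) (htT : t < T) :
    exp p * x p + energy x x' p * (exp (2 * t) - exp (2 * p)) / 2 ≤ exp t * x t := by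
  have key := le_of_hasDerivAt_nonneg (f := fun u => exp u * x u - energy x x' p * exp (2 * u) / 2)
    (f' := fun u => exp (2 * u) * (energy x x' u - energy x x' p)) hpt ?_ (fun u hu => ?_)
    (fun u hu => ?_)
  · linarith
  · exact ((continuous_exp.continuousOn.mul h.continuousOn).sub (by fun_prop)).mono
      ((Icc_subset_Ico_iff hpt).2 ⟨hp, htT⟩)
  · have hexp : HasDerivAt (fun u => exp (2 * u)) (exp (2 * u) * 2) u :=
      ((hasDerivAt_id u).const_mul 2).exp.congr_deriv (by simp)
    exact ((h.hasDerivAt_exp_mul (Ioo_subset_Ioo hp htT.le hu)).sub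
      ((hexp.const_mul _).div_const 2)).congr_deriv (by ring)
  · have := h.monotoneOn_energy hC ((Icc_subset_Ico_iff hpt).2 ⟨hp, htT⟩ (left_mem_Icc.2 hpt))
      ((Icc_subset_Ico_iff hpt).2 ⟨hp, htT⟩ (Ioo_subset_Icc_self hu)) hu.1.le
    exact mul_nonneg (exp_pos _).le (sub_nonneg.2 this)

lemma mul_energy_le (h : Supersolution C T x x' x'') (hC : 0 ≤ C) (hx₀ : 0 ≤ x 0)
    (he₀ : 0 ≤ energy x x' 0) {δ t : ℝ} (hδ₀ : 0 ≤ δ) (hδ₁ : δ ≤ 1) (hδt : δ ≤ t) (htT : t < T) :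
    δ / 3 * energy x x' (t - δ) ≤ exp (-t) * x t := by
  set p := t - δ with hp_def
  have hp : 0 ≤ p := sub_nonneg.2 hδt
  have hpT : p < T := by linarith
  have hEp : 0 ≤ energy x x' p :=
    he₀.trans (h.monotoneOn_energy hC ⟨le_rfl, by linarith⟩ ⟨hp, hpT⟩ hp)
  have hxp : 0 ≤ exp p * x p := by
    have := h.exp_mul_add_le hC le_rfl hp hpT
    simp only [mul_zero, exp_zero, one_mul] at this
    nlinarith [one_le_exp (by linarith : 0 ≤ 2 * p)]
  have hgap : exp (2 * t) * (2 * δ / 3) ≤ exp (2 * t) - exp (2 * p) := by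
    have : exp (2 * p) = exp (2 * t) * exp (-(2 * δ)) := by rw [← exp_add, hp_def]; ring_nf
    rw [this]
    nlinarith [exp_neg_two_mul_le hδ₀ hδ₁, exp_pos (2 * t)]
  have hxt := h.exp_mul_add_le hC hp (by linarith) htT
  calc δ / 3 * energy x x' p
        = exp (-(2 * t)) * (energy x x' p * (exp (2 * t) * (2 * δ / 3)) / 2) := by
          rw [exp_neg]; field_simp
    _ ≤ exp (-(2 * t)) * (energy x x' p * (exp (2 * t) - exp (2 * p)) / 2) := by gcongr
    _ ≤ exp (-(2 * t)) * (exp t * x t) := by gcongr; linarith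
    _ = exp (-t) * x t := by rw [← mul_assoc, ← exp_add]; ring_nf

lemma energy_add_le (h : Supersolution C T x x' x'') (hC : 0 ≤ C) {m p t : ℝ} (hm : 0 ≤ m)
    (hp : 0 ≤ p) (hpt : p ≤ t) (htT : t < T) (hmx : ∀ u ∈ Ioo p t, m ≤ exp (-u) * x u) :
    energy x x' p + C * m ^ 2 * (log (t + 1) - log (p + 1)) ≤ energy x x' t := by
  have key := le_of_hasDerivAt_nonneg (f := fun u => energy x x' u - C * m ^ 2 * log (u + 1))
    (f' := fun u => exp (-u) * (x'' u - x u) - C * m ^ 2 * (u + 1)⁻¹) hpt ?_ (fun u hu => ?_)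
    (fun u hu => ?_)
  · linarith
  · refine (h.continuousOn_energy.mono ((Icc_subset_Ico_iff hpt).2 ⟨hp, htT⟩)).sub
      (continuousOn_const.mul (ContinuousOn.log (by fun_prop) fun u hu => ?_))
    linarith [hp.trans hu.1]
  · have hu1 : u + 1 ≠ 0 := by linarith [hp.trans_lt hu.1]
    exact (h.hasDerivAt_energy (Ioo_subset_Ioo hp htT.le hu)).sub
      ((((hasDerivAt_id u).add_const 1).log hu1).const_mul _ |>.congr_deriv
        (by simp [div_eq_mul_inv]))
  · have hu1 : 0 < u + 1 := by linarith [hp.trans_lt hu.1]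
    have hsq : m ^ 2 ≤ (exp (-u) * x u) ^ 2 := pow_le_pow_left₀ hm (hmx u hu) 2
    have := h.sq_div_le_deriv_energy (Ioo_subset_Ioo hp htT.le hu)
    have : C * m ^ 2 / (u + 1) ≤ C * (exp (-u) * x u) ^ 2 / (u + 1) := by gcongr
    rw [sub_nonneg, ← div_eq_mul_inv]
    linarith

lemma add_mul_log_le_energy (h : Supersolution C T x x' x'') (hC : 0 ≤ C) (hx₀ : 0 ≤ x 0)
    (he₀ : 0 ≤ energy x x' 0) {b δ q t : ℝ} (hb : 0 ≤ b) (hδ₀ : 0 ≤ δ) (hδ₁ : δ ≤ 1)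
    (hq : 0 ≤ q) (hqt : q + δ ≤ t) (htT : t < T)
    (hbE : ∀ u, q ≤ u → u < T → b ≤ energy x x' u) :
    b + C * (δ * b / 3) ^ 2 * (log (t + 1) - log (q + δ + 1)) ≤ energy x x' t := by
  have hmx : ∀ u ∈ Ioo (q + δ) t, δ * b / 3 ≤ exp (-u) * x u := fun u hu => by
    have hbu := hbE (u - δ) (by linarith [hu.1]) (by linarith [hu.2])
    calc δ * b / 3 ≤ δ / 3 * energy x x' (u - δ) := by
          rw [mul_div_right_comm]; exact mul_le_mul_of_nonneg_left hbu (by positivity)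
      _ ≤ exp (-u) * x u :=
          h.mul_energy_le hC hx₀ he₀ hδ₀ hδ₁ (by linarith [hu.1]) (by linarith [hu.2])
  have := h.energy_add_le hC (by positivity) (by positivity) hqt htT hmx
  linarith [hbE (q + δ) (by linarith) (by linarith)]

lemma le_energy (h : Supersolution C T x x' x'') (hC : 0 < C) (hx₀ : 0 ≤ x 0) {a : ℝ}
    (ha : 0 < a) (haE : a ≤ energy x x' 0) (n : ℕ) {t : ℝ}
    (hnt : exp (logTime (9 / (C * a)) n) ≤ t + 1) (htT : t < T) :
    a * 2 ^ n ≤ energy x x' t := by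
  set K := 9 / (C * a)
  have hK : 0 ≤ K := by positivity
  induction n generalizing t with
  | zero =>
    have ht : 0 ≤ t := by simpa [logTime] using hnt
    simpa using haE.trans (h.monotoneOn_energy hC.le ⟨le_rfl, ht.trans_lt htT⟩ ⟨ht, htT⟩ ht)
  | succ n ih =>
    set L := logTime K n
    set δ : ℝ := (3 / 4) ^ n
    have hδ₀ : 0 ≤ δ := by positivity
    have hδ₁ : δ ≤ 1 := pow_le_one₀ (by norm_num) (by norm_num)
    have ht : 0 < t + 1 := (exp_pos _).trans_le hnt
    have hnt' : L + δ + K * (8 / 9) ^ n ≤ log (t + 1) := by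
      have := (le_log_iff_exp_le ht).2 hnt
      rw [logTime_succ] at this
      linarith
    have hLδ : exp L + δ ≤ exp (L + δ) := by
      rw [exp_add]; nlinarith [add_one_le_exp δ, one_le_exp (logTime_nonneg hK n)]
    have hlog : log (exp L - 1 + δ + 1) ≤ L + δ := by
      rw [log_le_iff_le_exp (by linarith [exp_pos L])]; linarith
    have hqt : exp L - 1 + δ ≤ t := by
      have := (le_log_iff_exp_le ht).1 ((le_add_of_nonneg_right (by positivity)).trans hnt')
      linarith
    have hstep := h.add_mul_log_le_energy hC.le hx₀ (ha.le.trans haE) (b := a * 2 ^ n)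
      (by positivity) hδ₀ hδ₁ (by linarith [one_le_exp (logTime_nonneg hK n)]) hqt htT
      (fun u hu huT => ih huT (by linarith))
    have hdouble : C * (δ * (a * 2 ^ n) / 3) ^ 2 * (K * (8 / 9) ^ n) = a * 2 ^ n := by
      have hpow : ((3 / 4 : ℝ) ^ n) ^ 2 * (2 ^ n) ^ 2 * (8 / 9) ^ n = 2 ^ n := by
        rw [← pow_mul, ← pow_mul, mul_comm n 2, pow_mul, pow_mul, ← mul_pow, ← mul_pow]
        norm_num
      calc C * (δ * (a * 2 ^ n) / 3) ^ 2 * (K * (8 / 9) ^ n)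
          = a * (((3 / 4) ^ n) ^ 2 * (2 ^ n) ^ 2 * (8 / 9) ^ n) := by
            simp only [K, δ]; field_simp; ring
        _ = a * 2 ^ n := by rw [hpow]
    have : a * 2 ^ n ≤ C * (δ * (a * 2 ^ n) / 3) ^ 2 * (log (t + 1) - log (exp L - 1 + δ + 1)) :=
      hdouble.symm.le.trans (by gcongr; linarith)
    rw [pow_succ]; linarith

lemma le_exp (h : Supersolution C T x x' x'') (hC : 0 < C) (hx₀ : 0 ≤ x 0) {a : ℝ} (ha : 0 < a)
    (haE : a ≤ energy x x' 0) : T ≤ exp (4 + 81 / (C * a)) := by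
  by_contra! hT
  have hK : 0 ≤ 9 / (C * a) := by positivity
  obtain ⟨n, hn⟩ :=
    pow_unbounded_of_one_lt (energy x x' (exp (4 + 81 / (C * a)) - 1) / a) one_lt_two
  have hlog : logTime (9 / (C * a)) n ≤ 4 + 81 / (C * a) :=
    (logTime_le hK n).trans_eq (by ring)
  have := h.le_energy hC hx₀ ha haE n (t := exp (4 + 81 / (C * a)) - 1)
    (by rw [sub_add_cancel]; exact exp_le_exp.2 hlog) (by linarith)
  rw [div_lt_iff₀ ha] at hn
  linarith

end Supersolution

lemma derivWithin_Ico_left {f : ℝ → ℝ} {a b : ℝ} (hab : a < b) (hf : ContDiffOn ℝ 1 f (Ico a b))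
    (h : DifferentiableAt ℝ f a ∨ ContinuousAt (deriv f) a) :
    derivWithin f (Ico a b) a = deriv f a := by
  rcases h with h | h
  · exact h.derivWithin (uniqueDiffOn_Ico a b a ⟨le_rfl, hab⟩)
  have hlim : Tendsto (derivWithin f (Ico a b)) (𝓝[Ioo a b] a) (𝓝 (derivWithin f (Ico a b) a)) :=
    ((hf.continuousOn_derivWithin (uniqueDiffOn_Ico a b) le_rfl) a ⟨le_rfl, hab⟩).mono_left
      (nhdsWithin_mono _ Ioo_subset_Ico_self)
  have heq : deriv f =ᶠ[𝓝[Ioo a b] a] derivWithin f (Ico a b) :=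
    eventually_nhdsWithin_of_forall fun t ht =>
      (derivWithin_of_mem_nhds (Ico_mem_nhds_iff.2 ht)).symm
  have := left_nhdsWithin_Ioo_neBot hab
  exact tendsto_nhds_unique hlim ((h.tendsto.mono_left nhdsWithin_le_nhds).congr' heq)

lemma supersolution_derivWithin {C T : ℝ} {X : ℝ → ℝ} (hX : ContDiffOn ℝ 2 X (Ico 0 T))
    (hle : ∀ t ∈ Ioo 0 T, C * X t ^ 2 / (exp t * (t + 1)) + X t ≤ deriv (deriv X) t) :
    Supersolution C T X (derivWithin X (Ico 0 T))
      (derivWithin (derivWithin X (Ico 0 T)) (Ico 0 T)) := by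
  have hX₁ : ContDiffOn ℝ 1 (derivWithin X (Ico 0 T)) (Ico 0 T) :=
    hX.derivWithin (uniqueDiffOn_Ico 0 T) (by norm_num)
  have hD : ∀ {f : ℝ → ℝ}, ContDiffOn ℝ 1 f (Ico 0 T) →
      ∀ t ∈ Ioo 0 T, HasDerivAt f (derivWithin f (Ico 0 T) t) t := fun hf t ht =>
    (hf.differentiableOn one_ne_zero t (Ioo_subset_Ico_self ht)).hasDerivWithinAt.hasDerivAt
      (Ico_mem_nhds_iff.2 ht)
  refine ⟨hX.continuousOn, hX₁.continuousOn, hD (hX.of_le (by norm_num)), hD hX₁, fun t ht => ?_⟩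
  have heq : deriv X =ᶠ[𝓝 t] derivWithin X (Ico 0 T) :=
    eventually_of_mem (isOpen_Ioo.mem_nhds ht) fun s hs =>
      (derivWithin_of_mem_nhds (Ico_mem_nhds_iff.2 hs)).symm
  rw [derivWithin_of_mem_nhds (Ico_mem_nhds_iff.2 ht), ← heq.deriv_eq]
  exact hle t ht

/-- ODE blow-up lemma (n = 3 case, Lemma 2.1 of Jin–Zhou): a `C²` function on
`[0,T)` satisfying `X'' ≥ C X² / (eᵗ(t+1)) + X` with small positive "initial energy"
`X(0) + X'(0) = ε x₀` forces `T ≤ exp (C' / ε)`. -/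
theorem stmt_13 (C x₀ : ℝ) (hC : 0 < C) (hx₀ : 0 < x₀) :
    ∃ ε₀ C' : ℝ, 0 < ε₀ ∧ 0 < C' ∧
      ∀ ε : ℝ, 0 < ε → ε ≤ ε₀ →
        ∀ (T : ℝ) (X : ℝ → ℝ),
          ContDiffOn ℝ 2 X (Ico 0 T) →
          (∀ t ∈ Ico (0 : ℝ) T,
              C * X t ^ 2 / (exp t * (t + 1)) + X t ≤ deriv (deriv X) t) →
          X 0 + deriv X 0 = ε * x₀ →
          0 ≤ X 0 → 0 ≤ deriv X 0 →
          (0 : ℝ) < T →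
          T ≤ exp (C' / ε) := by
  refine ⟨1, 4 + 81 / (C * x₀), one_pos, by positivity, ?_⟩
  intro ε hε hε₁ T X hX hle hinit hX₀ _ hT₀
  -- `deriv X 0` is two-sided; it can only differ from the one-sided derivative by being the
  -- junk value `0`, and then `X 0 = ε x₀ > 0` makes `deriv (deriv X) 0 > 0`, so `deriv X` is
  -- continuous at `0`.
  have hX₁₀ : derivWithin X (Ico 0 T) 0 = deriv X 0 := by
    refine derivWithin_Ico_left hT₀ (hX.of_le (by norm_num)) ?_
    by_cases hd : deriv X 0 = 0
    · have h₀ := hle 0 ⟨le_rfl, hT₀⟩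
      rw [show X 0 = ε * x₀ by linarith] at h₀
      refine Or.inr (differentiableAt_of_deriv_ne_zero (ne_of_gt ?_)).continuousAt
      exact lt_of_lt_of_le (by positivity) h₀
    · exact Or.inl (differentiableAt_of_deriv_ne_zero hd)
  have hE : energy X (derivWithin X (Ico 0 T)) 0 = ε * x₀ := by simp [energy, hX₁₀, hinit]
  have hT := (supersolution_derivWithin hX fun t ht => hle t (Ioo_subset_Ico_self ht)).le_exp hC
    hX₀ (by positivity) hE.ge
  have hexp : 4 + 81 / (C * (ε * x₀)) ≤ (4 + 81 / (C * x₀)) / ε := by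
    rw [add_div, show 81 / (C * (ε * x₀)) = 81 / (C * x₀) / ε by field_simp]
    gcongr
    rw [le_div_iff₀ hε]; nlinarith
  exact hT.trans (exp_le_exp.2 hexp)
end

section
/- (Reduction step X' = Y) Suppose ρ, u are C¹ on [0,T) × ℝ³, ρ - 1 and u are supported in {|x| ≤ t+1} for each t, and the continuity equation ∂_t ρ + ∇·(ρu) = 0 holds. Define X(t) = ∫_{ℝ³}∫_{S²} e^{ω·x}(ρ(t,x)-1) dω dx and Y(t) = ∫_{ℝ³}∫_{S²} e^{ω·x} ρ(t,x)(u(t,x)·ω) dω dx. Then X is differentiable and X'(t) = Y(t) for all t ∈ [0,T). -/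
/-!
With `K(x) = ∫_{S²} e^{ω·x} dω` we have `X(t) = ∫ K (ρ(t) - 1)`, and since
`∇K(x) = ∫_{S²} e^{ω·x} ω dω`, also `Y(t) = ∫ ρ(t) u(t)·∇K`. As `ρ(t) - 1` is supported
in a ball whose radius increases with `t`, one may differentiate under the integral sign at
interior times; the continuity equation and an integration by parts then turn
`∫ K ∂ₜρ = -∫ K ∇·(ρu)` into `∫ ρ u·∇K = Y`. At `t = 0`, where only a one-sided time
derivative exists, `X' = Y` follows from the continuity of `X` and `Y` on `[0, T)`.
-/

open Real Set MeasureTheory Filter Topology InnerProductSpace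

section Calculus

variable {E F : Type*} [NormedAddCommGroup E] [NormedSpace ℝ E]
  [NormedAddCommGroup F] [NormedSpace ℝ F]

theorem hasDerivWithinAt_Ico_of_continuousOn {f f' : ℝ → F} {a b t : ℝ}
    (hf : ContinuousOn f (Ico a b)) (hf' : ContinuousOn f' (Ico a b))
    (hderiv : ∀ s ∈ Ioo a b, HasDerivAt f (f' s) s) (ht : t ∈ Ico a b) :
    HasDerivWithinAt f (f' t) (Ico a b) t := by
  rcases ht.1.eq_or_lt with rfl | hat
  · have hIoo : Ioo a b ∈ 𝓝[>] a := Ioo_mem_nhdsGT ht.2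
    have hlim : Tendsto f' (𝓝[>] a) (𝓝 (f' a)) := by
      rw [← nhdsWithin_Ioo_eq_nhdsGT ht.2]
      exact (hf' a ht).mono Ioo_subset_Ico_self
    refine (hasDerivWithinAt_Ici_of_tendsto_deriv
      (fun s hs => (hderiv s hs).differentiableAt.differentiableWithinAt)
      ((hf a ht).mono Ioo_subset_Ico_self) hIoo ?_).mono Ico_subset_Ici_self
    exact hlim.congr' (eventually_of_mem hIoo fun s hs => (hderiv s hs).deriv.symm)
  · exact (hderiv t ⟨hat, ht.2⟩).hasDerivWithinAt

theorem ContDiffOn.contDiff_slice_of_mem_nhds {n : WithTop ℕ∞} {f : ℝ → E → F}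
    {s : Set ℝ} {t : ℝ} (hf : ContDiffOn ℝ n (Function.uncurry f) (s ×ˢ univ)) (hs : s ∈ 𝓝 t) :
    ContDiff ℝ n (f t) :=
  contDiff_iff_contDiffAt.2 fun x =>
    (hf.contDiffAt (prod_mem_nhds hs univ_mem)).comp x (contDiff_prodMk_right t).contDiffAt

end Calculus

section ParametricIntegral

variable {E G : Type*} [NormedAddCommGroup E] [NormedAddCommGroup G] [NormedSpace ℝ G]
  [MeasurableSpace E] [OpensMeasurableSpace E] {μ : Measure E} [IsFiniteMeasureOnCompacts μ]

theorem continuousOn_integral_of_monotone_support [ProperSpace E] {F : ℝ → E → G} {a b : ℝ}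
    {R : ℝ → ℝ} (hR : Monotone R) (hF : ContinuousOn (Function.uncurry F) (Ico a b ×ˢ univ))
    (hF0 : ∀ t ∈ Ico a b, ∀ x, R t < ‖x‖ → F t x = 0) :
    ContinuousOn (fun t => ∫ x, F t x ∂μ) (Ico a b) := by
  intro t₀ ht₀
  obtain ⟨t₁, ht₀t₁, ht₁b⟩ := exists_between ht₀.2
  have hsub : Ico a t₁ ⊆ Ico a b := Ico_subset_Ico_right ht₁b.le
  have hcont := continuousOn_integral_of_compact_support (μ := μ)
    (isCompact_closedBall 0 (R t₁)) (hF.mono (prod_mono hsub subset_rfl))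
    fun t x ht hx => hF0 t (hsub ht) x ((hR ht.2.le).trans_lt (by simpa using hx))
  exact (hcont t₀ ⟨ht₀.1, ht₀t₁⟩).mono_of_mem_nhdsWithin <|
    mem_of_superset (inter_mem_nhdsWithin _ (Iio_mem_nhds ht₀t₁)) fun t ht => ⟨ht.1.1, ht.2⟩

theorem hasDerivAt_integral_of_contDiffOn_of_compact_support [NormedSpace ℝ E]
    [SecondCountableTopology E] {F : ℝ → E → G} {U : Set ℝ}
    {k : Set E} (hU : IsOpen U) (hk : IsCompact k)
    (hF : ContDiffOn ℝ 1 (Function.uncurry F) (U ×ˢ univ))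
    (hFk : ∀ t ∈ U, ∀ x ∉ k, F t x = 0) {t₀ : ℝ} (ht₀ : t₀ ∈ U) :
    HasDerivAt (fun t => ∫ x, F t x ∂μ) (∫ x, deriv (F · x) t₀ ∂μ) t₀ := by
  set D : ℝ × E → G := fun p => fderiv ℝ (Function.uncurry F) p (1, 0)
  have hopen : IsOpen (U ×ˢ (univ : Set E)) := hU.prod isOpen_univ
  have hD : ∀ t ∈ U, ∀ x, HasDerivAt (F · x) (D (t, x)) t := fun t ht x =>
    ((hF.contDiffAt (hopen.mem_nhds ⟨ht, mem_univ x⟩)).differentiableAt one_ne_zero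
      ).hasFDerivAt.comp_hasDerivAt t ((hasDerivAt_id t).prodMk (hasDerivAt_const t x))
  have hDc : ContinuousOn D (U ×ˢ univ) :=
    (hF.continuousOn_fderiv_of_isOpen hopen le_rfl).clm_apply continuousOn_const
  have hDk : ∀ t ∈ U, ∀ x ∉ k, D (t, x) = 0 := fun t ht x hx =>
    (hD t ht x).unique <| (hasDerivAt_const t (0 : G)).congr_of_eventuallyEq <|
      eventually_of_mem (hU.mem_nhds ht) fun s hs => hFk s hs x hx
  have hslice : ∀ t ∈ U, Continuous (F t) := fun t ht =>
    hF.continuousOn.comp_continuous (Continuous.prodMk_right t) fun x => ⟨ht, mem_univ x⟩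
  obtain ⟨δ, hδ, hball⟩ := Metric.isOpen_iff.mp hU t₀ ht₀
  have hsub : Metric.closedBall t₀ (δ / 2) ⊆ U :=
    (Metric.closedBall_subset_ball (half_lt_self hδ)).trans hball
  obtain ⟨M, hM⟩ := ((isCompact_closedBall t₀ (δ / 2)).prod hk).exists_bound_of_continuousOn
    (hDc.mono (prod_mono hsub (subset_univ k)))
  have hbound : ∀ x, ∀ t ∈ Metric.closedBall t₀ (δ / 2),
      ‖D (t, x)‖ ≤ k.indicator (fun _ => M) x := by
    intro x t ht
    by_cases hx : x ∈ k
    · rw [indicator_of_mem hx]; exact hM (t, x) ⟨ht, hx⟩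
    · rw [indicator_of_notMem hx, hDk t (hsub ht) x hx, norm_zero]
  refine (hasDerivAt_integral_of_dominated_loc_of_deriv_le (F' := fun t x => D (t, x))
    (Metric.closedBall_mem_nhds t₀ (half_pos hδ))
    (eventually_of_mem (hU.mem_nhds ht₀) fun t ht => (hslice t ht).aestronglyMeasurable)
    ((hslice t₀ ht₀).integrable_of_hasCompactSupport
      (HasCompactSupport.intro hk (hFk t₀ ht₀)))
    ((hDc.comp_continuous (Continuous.prodMk_right t₀)
      fun x => ⟨ht₀, mem_univ x⟩).aestronglyMeasurable)
    (ae_of_all _ hbound) ((integrable_indicator_iff hk.measurableSet).2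
      (integrableOn_const hk.measure_ne_top))
    (ae_of_all _ fun x t ht => hD t (hsub ht) x)).2.congr_deriv ?_
  exact integral_congr_ae (ae_of_all _ fun x => (hD t₀ ht₀ x).deriv.symm)

end ParametricIntegral

theorem contDiff_one_of_hasGradientAt {E : Type*} [NormedAddCommGroup E] [InnerProductSpace ℝ E]
    [CompleteSpace E] {g : E → ℝ} {G : E → E} (hg : ∀ x, HasGradientAt g (G x) x)
    (hG : Continuous G) : ContDiff ℝ 1 g :=
  contDiff_one_iff_hasFDerivAt.2
    ⟨fun x => toDual ℝ E (G x), (toDual ℝ E).continuous.comp hG, hg⟩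

section IntegrationByParts

variable {E : Type*} [NormedAddCommGroup E] [NormedSpace ℝ E] [FiniteDimensional ℝ E]
  [MeasurableSpace E] [BorelSpace E] {μ : Measure E} [μ.IsAddHaarMeasure]

theorem integral_mul_fderiv_eq_neg_fderiv_mul_of_hasCompactSupport {f g : E → ℝ}
    (hf : ContDiff ℝ 1 f) (hg : ContDiff ℝ 1 g) (hgs : HasCompactSupport g) (v : E) :
    ∫ x, f x * fderiv ℝ g x v ∂μ = -∫ x, fderiv ℝ f x v * g x ∂μ := by
  have hf' : Continuous fun x => fderiv ℝ f x v :=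
    (hf.continuous_fderiv one_ne_zero).clm_apply continuous_const
  have hg' : Continuous fun x => fderiv ℝ g x v :=
    (hg.continuous_fderiv one_ne_zero).clm_apply continuous_const
  refine integral_mul_fderiv_eq_neg_fderiv_mul_of_integrable
    ((hf'.mul hg.continuous).integrable_of_hasCompactSupport hgs.mul_left)
    ((hf.continuous.mul hg').integrable_of_hasCompactSupport
      (hgs.fderiv_apply (𝕜 := ℝ) v).mul_left)
    ((hf.continuous.mul hg.continuous).integrable_of_hasCompactSupport hgs.mul_left)
    (fun x _ => hf.differentiable one_ne_zero x) (fun x _ => hg.differentiable one_ne_zero x)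

end IntegrationByParts

section Divergence

variable {ι : Type*} [Fintype ι] [DecidableEq ι]

noncomputable def divergence (V : EuclideanSpace ℝ ι → EuclideanSpace ℝ ι)
    (x : EuclideanSpace ℝ ι) : ℝ :=
  ∑ i, fderiv ℝ (fun y => V y i) x (EuclideanSpace.single i 1)

theorem integral_mul_divergence_eq_neg_integral_inner {g : EuclideanSpace ℝ ι → ℝ}
    {G V : EuclideanSpace ℝ ι → EuclideanSpace ℝ ι} (hg : ∀ x, HasGradientAt g (G x) x)
    (hG : Continuous G) (hV : ContDiff ℝ 1 V) (hVs : HasCompactSupport V) :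
    ∫ x, g x * divergence V x = -∫ x, inner ℝ (V x) (G x) := by
  have hgC := contDiff_one_of_hasGradientAt hg hG
  have hgrad : ∀ x i, fderiv ℝ g x (EuclideanSpace.single i 1) = G x i := fun x i => by
    rw [(hg x).hasFDerivAt.fderiv, toDual_apply_apply, EuclideanSpace.inner_single_right]
    simp
  have hVi : ∀ i, ContDiff ℝ 1 fun y => V y i := fun i =>
    (EuclideanSpace.proj (𝕜 := ℝ) i).contDiff.comp hV
  have hVis : ∀ i, HasCompactSupport fun y => V y i := fun i =>
    hVs.comp_left (g := fun v : EuclideanSpace ℝ ι => v i) rfl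
  calc ∫ x, g x * divergence V x
      = ∑ i, ∫ x, g x * fderiv ℝ (fun y => V y i) x (EuclideanSpace.single i 1) := by
        simp only [divergence, Finset.mul_sum]
        refine integral_finsetSum _ fun i _ => ?_
        exact (hgC.continuous.mul ((((hVi i).continuous_fderiv one_ne_zero).clm_apply
          continuous_const))).integrable_of_hasCompactSupport
          ((hVis i).fderiv_apply (𝕜 := ℝ) _).mul_left
    _ = ∑ i, -∫ x, G x i * V x i := by
        refine Finset.sum_congr rfl fun i _ => ?_
        simp only [integral_mul_fderiv_eq_neg_fderiv_mul_of_hasCompactSupport hgC (hVi i) (hVis i),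
          hgrad]
    _ = -∫ x, inner ℝ (V x) (G x) := by
        rw [Finset.sum_neg_distrib, ← integral_finsetSum]
        · simp [PiLp.inner_apply]
        · exact fun i _ => ((((EuclideanSpace.proj (𝕜 := ℝ) i).continuous.comp hG).mul
            (hVi i).continuous).integrable_of_hasCompactSupport (hVis i).mul_left)

end Divergence

section VecMgf

variable {Ω E : Type*} [TopologicalSpace Ω] [CompactSpace Ω] [MeasurableSpace Ω]
  [OpensMeasurableSpace Ω] [NormedAddCommGroup E] [InnerProductSpace ℝ E]
  {X : Ω → E} {μ : Measure Ω} [IsFiniteMeasure μ]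

/-- The moment generating function of the random vector `X`; for the inclusion of the unit
sphere this is the kernel `K` of the header. -/
noncomputable def vecMgf (X : Ω → E) (μ : Measure Ω) (x : E) : ℝ :=
  ∫ ω, exp (inner ℝ (X ω) x) ∂μ

noncomputable def vecMgfGrad (X : Ω → E) (μ : Measure Ω) (x : E) : E :=
  ∫ ω, exp (inner ℝ (X ω) x) • X ω ∂μ

theorem integrable_exp_inner_smul (hX : Continuous X) (x : E) :
    Integrable (fun ω => exp (inner ℝ (X ω) x) • X ω) μ :=
  (by fun_prop : Continuous fun ω => exp (inner ℝ (X ω) x) • X ω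
    ).integrable_of_hasCompactSupport (HasCompactSupport.of_compactSpace _)

variable [FiniteDimensional ℝ E]

theorem continuous_vecMgfGrad (hX : Continuous X) : Continuous (vecMgfGrad X μ) := by
  unfold vecMgfGrad
  simpa using continuous_parametric_integral_of_continuous (μ := μ)
    (f := fun x ω => exp (inner ℝ (X ω) x) • X ω) (by fun_prop) isCompact_univ

theorem inner_vecMgfGrad (hX : Continuous X) (v x : E) :
    inner ℝ v (vecMgfGrad X μ x) =
      ∫ ω, exp (inner ℝ (X ω) x) * inner ℝ v (X ω) ∂μ := by
  simp only [vecMgfGrad, ← integral_inner (integrable_exp_inner_smul hX x), real_inner_smul_right]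

theorem hasGradientAt_vecMgf (hX : Continuous X) (x : E) :
    HasGradientAt (vecMgf X μ) (vecMgfGrad X μ x) x := by
  obtain ⟨C, hC⟩ := isCompact_univ.exists_bound_of_continuousOn hX.continuousOn
  have hderiv : ∀ ω y, HasFDerivAt (fun z => exp (inner ℝ (X ω) z))
      (innerSL ℝ (exp (inner ℝ (X ω) y) • X ω)) y := fun ω y => by
    rw [map_smul]; exact (innerSL ℝ (X ω)).hasFDerivAt.exp
  have hbound : ∀ ω, ∀ y ∈ Metric.closedBall x 1,
      ‖innerSL ℝ (exp (inner ℝ (X ω) y) • X ω)‖ ≤ exp (C * (‖x‖ + 1)) * C := by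
    intro ω y hy
    have hXω : ‖X ω‖ ≤ C := hC ω (mem_univ ω)
    have hy' : ‖y‖ ≤ ‖x‖ + 1 := norm_le_of_mem_closedBall hy
    have hinner : inner ℝ (X ω) y ≤ C * (‖x‖ + 1) :=
      (real_inner_le_norm _ _).trans (by gcongr; exact (norm_nonneg _).trans hXω)
    rw [innerSL_apply_norm, norm_smul, norm_of_nonneg (exp_pos _).le]
    gcongr
  have h := hasFDerivAt_integral_of_dominated_of_fderiv_le (μ := μ)
    (F := fun y ω => exp (inner ℝ (X ω) y))
    (F' := fun y ω => innerSL ℝ (exp (inner ℝ (X ω) y) • X ω))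
    (Metric.closedBall_mem_nhds x one_pos) (.of_forall fun y =>
      (by fun_prop : Continuous fun ω => exp (inner ℝ (X ω) y)).aestronglyMeasurable)
    ((by fun_prop : Continuous fun ω => exp (inner ℝ (X ω) x)).integrable_of_hasCompactSupport
      (HasCompactSupport.of_compactSpace _))
    ((innerSL ℝ).continuous.comp (by fun_prop : Continuous fun ω =>
      exp (inner ℝ (X ω) x) • X ω)).aestronglyMeasurable
    (ae_of_all _ hbound) (integrable_const _)
    (ae_of_all _ fun ω y _ => hderiv ω y)
  rwa [ContinuousLinearMap.integral_comp_comm _ (integrable_exp_inner_smul hX x)] at h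

theorem contDiff_vecMgf (hX : Continuous X) : ContDiff ℝ 1 (vecMgf X μ) :=
  contDiff_one_of_hasGradientAt (hasGradientAt_vecMgf hX) (continuous_vecMgfGrad hX)

end VecMgf

section ContinuityEquation

variable {ι : Type*} [Fintype ι] [DecidableEq ι] {ρ : ℝ → EuclideanSpace ℝ ι → ℝ}
  {u : ℝ → EuclideanSpace ℝ ι → EuclideanSpace ℝ ι} {g : EuclideanSpace ℝ ι → ℝ}
  {G : EuclideanSpace ℝ ι → EuclideanSpace ℝ ι}

theorem integral_mul_deriv_eq_of_continuity_equation {t : ℝ}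
    (hρ : ContDiff ℝ 1 (ρ t)) (hu : ContDiff ℝ 1 (u t)) (hus : HasCompactSupport (u t))
    (hcont : ∀ x, deriv (fun s => ρ s x) t
      + ∑ i, fderiv ℝ (fun y => ρ t y * u t y i) x (EuclideanSpace.single i 1) = 0)
    (hg : ∀ x, HasGradientAt g (G x) x) (hG : Continuous G) :
    ∫ x, g x * deriv (fun s => ρ s x) t = ∫ x, ρ t x * inner ℝ (u t x) (G x) := by
  have hdiv : ∀ x, deriv (fun s => ρ s x) t = -divergence (ρ t • u t) x :=
    fun x => eq_neg_of_add_eq_zero_left (hcont x)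
  simp only [hdiv, mul_neg, integral_neg,
    integral_mul_divergence_eq_neg_integral_inner hg hG (hρ.smul hu) hus.smul_left, neg_neg,
    Pi.smul_apply', real_inner_smul_left]

theorem hasDerivAt_integral_mul_sub_one_of_continuity_equation {a b : ℝ} {R : ℝ → ℝ}
    (hR : Monotone R) (hρ : ContDiffOn ℝ 1 (Function.uncurry ρ) (Ioo a b ×ˢ univ))
    (hu : ContDiffOn ℝ 1 (Function.uncurry u) (Ioo a b ×ˢ univ))
    (hsupp : ∀ t ∈ Ioo a b, ∀ x, R t < ‖x‖ → ρ t x = 1 ∧ u t x = 0)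
    (hcont : ∀ t ∈ Ioo a b, ∀ x, deriv (fun s => ρ s x) t
      + ∑ i, fderiv ℝ (fun y => ρ t y * u t y i) x (EuclideanSpace.single i 1) = 0)
    (hg : ∀ x, HasGradientAt g (G x) x) (hG : Continuous G) {t : ℝ} (ht : t ∈ Ioo a b) :
    HasDerivAt (fun t => ∫ x, g x * (ρ t x - 1))
      (∫ x, ρ t x * inner ℝ (u t x) (G x)) t := by
  obtain ⟨t₁, htt₁, ht₁b⟩ := exists_between ht.2
  have hsub : Ioo a t₁ ⊆ Ioo a b := Ioo_subset_Ioo_right ht₁b.le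
  have hk : ∀ s ∈ Ioo a t₁, ∀ x ∉ Metric.closedBall 0 (R t₁), ρ s x = 1 :=
    fun s hs x hx => (hsupp s (hsub hs) x ((hR hs.2.le).trans_lt (by simpa using hx))).1
  have hus : HasCompactSupport (u t) := HasCompactSupport.intro (isCompact_closedBall 0 (R t))
    fun x hx => (hsupp t ht x (by simpa using hx)).2
  have hnhds : Ioo a b ∈ 𝓝 t := isOpen_Ioo.mem_nhds ht
  simpa only [deriv_const_mul_field', deriv_sub_const,
    integral_mul_deriv_eq_of_continuity_equation (hρ.contDiff_slice_of_mem_nhds hnhds)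
      (hu.contDiff_slice_of_mem_nhds hnhds) hus (hcont t ht) hg hG] using
    hasDerivAt_integral_of_contDiffOn_of_compact_support (μ := volume)
      (F := fun s x => g x * (ρ s x - 1)) isOpen_Ioo (isCompact_closedBall 0 (R t₁))
      (((contDiff_one_of_hasGradientAt hg hG).comp contDiff_snd).contDiffOn.mul
        ((hρ.mono (prod_mono hsub subset_rfl)).sub contDiffOn_const))
      (fun s hs x hx => by simp [hk s hs x hx]) ⟨ht.1, htt₁⟩

theorem hasDerivWithinAt_integral_mul_sub_one_of_continuity_equation {a b : ℝ} {R : ℝ → ℝ}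
    (hR : Monotone R) (hρ : ContDiffOn ℝ 1 (Function.uncurry ρ) (Ico a b ×ˢ univ))
    (hu : ContDiffOn ℝ 1 (Function.uncurry u) (Ico a b ×ˢ univ))
    (hsupp : ∀ t ∈ Ico a b, ∀ x, R t < ‖x‖ → ρ t x = 1 ∧ u t x = 0)
    (hcont : ∀ t ∈ Ioo a b, ∀ x, deriv (fun s => ρ s x) t
      + ∑ i, fderiv ℝ (fun y => ρ t y * u t y i) x (EuclideanSpace.single i 1) = 0)
    (hg : ∀ x, HasGradientAt g (G x) x) (hG : Continuous G) {t : ℝ} (ht : t ∈ Ico a b) :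
    HasDerivWithinAt (fun t => ∫ x, g x * (ρ t x - 1))
      (∫ x, ρ t x * inner ℝ (u t x) (G x)) (Ico a b) t := by
  have hIoo : Ioo a b ×ˢ (univ : Set (EuclideanSpace ℝ ι)) ⊆ Ico a b ×ˢ univ :=
    prod_mono Ioo_subset_Ico_self subset_rfl
  refine hasDerivWithinAt_Ico_of_continuousOn ?_ ?_
    (fun s hs => hasDerivAt_integral_mul_sub_one_of_continuity_equation hR (hρ.mono hIoo)
      (hu.mono hIoo) (fun t ht => hsupp t (Ioo_subset_Ico_self ht)) hcont hg hG hs) ht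
  · exact continuousOn_integral_of_monotone_support hR
      (((contDiff_one_of_hasGradientAt hg hG).continuous.comp continuous_snd).continuousOn.mul
        (hρ.continuousOn.sub continuousOn_const))
      fun t ht x hx => by simp [(hsupp t ht x hx).1]
  · exact continuousOn_integral_of_monotone_support hR
      (hρ.continuousOn.mul (hu.continuousOn.inner (hG.comp continuous_snd).continuousOn))
      fun t ht x hx => by simp [(hsupp t ht x hx).2]

end ContinuityEquation

/-- Reduction step `X' = Y`: if `ρ, u` are `C¹` on `[0,T) × ℝ³`, `ρ - 1` and `u` are
supported in `{|x| ≤ t+1}`, and the continuity equation `∂ₜρ + ∇·(ρu) = 0` holds, then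
`X(t) = ∫∫ e^{ω·x}(ρ-1)` is differentiable with `X' = Y = ∫∫ e^{ω·x} ρ (u·ω)`. -/
theorem stmt_15 (T : ℝ)
    (ρ : ℝ → EuclideanSpace ℝ (Fin 3) → ℝ)
    (u : ℝ → EuclideanSpace ℝ (Fin 3) → EuclideanSpace ℝ (Fin 3))
    (hρ : ContDiffOn ℝ 1 (fun p : ℝ × EuclideanSpace ℝ (Fin 3) => ρ p.1 p.2)
      (Ico 0 T ×ˢ univ))
    (hu : ContDiffOn ℝ 1 (fun p : ℝ × EuclideanSpace ℝ (Fin 3) => u p.1 p.2)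
      (Ico 0 T ×ˢ univ))
    (hsupp : ∀ t ∈ Ico (0 : ℝ) T, ∀ x : EuclideanSpace ℝ (Fin 3),
      t + 1 < ‖x‖ → ρ t x = 1 ∧ u t x = 0)
    (hcont : ∀ t ∈ Ico (0 : ℝ) T, ∀ x : EuclideanSpace ℝ (Fin 3),
      deriv (fun s => ρ s x) t
        + ∑ i : Fin 3,
            fderiv ℝ (fun y => ρ t y * u t y i) x (EuclideanSpace.single i 1) = 0)
    (X Y : ℝ → ℝ)
    (hX : ∀ t, X t = ∫ x : EuclideanSpace ℝ (Fin 3),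
        ∫ ω : Metric.sphere (0 : EuclideanSpace ℝ (Fin 3)) 1,
          exp (inner ℝ (ω : EuclideanSpace ℝ (Fin 3)) x) * (ρ t x - 1)
        ∂((volume : Measure (EuclideanSpace ℝ (Fin 3))).toSphere))
    (hY : ∀ t, Y t = ∫ x : EuclideanSpace ℝ (Fin 3),
        ∫ ω : Metric.sphere (0 : EuclideanSpace ℝ (Fin 3)) 1,
          exp (inner ℝ (ω : EuclideanSpace ℝ (Fin 3)) x)
            * (ρ t x * inner ℝ (u t x) (ω : EuclideanSpace ℝ (Fin 3)))
        ∂((volume : Measure (EuclideanSpace ℝ (Fin 3))).toSphere)) :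
    ∀ t ∈ Ico (0 : ℝ) T, HasDerivWithinAt X (Y t) (Ico 0 T) t := by
  intro t ht
  set incl : Metric.sphere (0 : EuclideanSpace ℝ (Fin 3)) 1 → EuclideanSpace ℝ (Fin 3) :=
    Subtype.val
  set μ := (volume : Measure (EuclideanSpace ℝ (Fin 3))).toSphere
  have hincl : Continuous incl := continuous_subtype_val
  have hX' : X = fun t => ∫ x, vecMgf incl μ x * (ρ t x - 1) :=
    funext fun t => by simp only [hX, integral_mul_const, vecMgf, incl]
  have hY' : Y = fun t => ∫ x, ρ t x * inner ℝ (u t x) (vecMgfGrad incl μ x) :=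
    funext fun t => by
      simp only [hY, inner_vecMgfGrad hincl, ← integral_const_mul, incl]
      simp only [mul_left_comm]
  rw [hX', hY']
  exact hasDerivWithinAt_integral_mul_sub_one_of_continuity_equation (R := (· + 1))
    (monotone_id.add_const 1) hρ hu hsupp (fun t ht => hcont t (Ioo_subset_Ico_self ht))
    (hasGradientAt_vecMgf hincl) (continuous_vecMgfGrad hincl) ht
end
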